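/- Let a₃, a₆ be integers with a₃² + 4a₆ ≠ 0, and let p be a prime with p ∤ 3(a₃² + 4a₆). Set A_p = 1 + #{(x,y) ∈ 𝔽_p × 𝔽_p : y² + a₃y = x³ + a₆} and t_p = 1 + p − A_p. Then: (i) if p ≡ 2 (mod 3), t_p = 0; (ii) if p ≡ 1 (mod 3), t_p ≡ Σ_{k=⌊(p−1)/6⌋}^{(p−1)/3} C((p−1)/3 + k, k)·C(k, (p−1)/3 − k) · a₃^{2k−(p−1)/3} a₆^{(p−1)/3 − k} (mod p). In particular, for the curve y² = x³ + a₆ (a₃ = 0, a₆ ≠ 0, p ∤ 6a₆): t_p = 0 if p ≢ 1 (mod 6), and t_p ≡ C((p−1)/2, (p−1)/6) · a₆^{(p−1)/6} (mod p) if p ≡ 1 (mod 6). -/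

import Mathlib

/-!
Over `𝔽_p` the indicator of `F = 0` is `1 - F ^ (p - 1)`, so the number `N` of affine points
satisfies `t_p ≡ -N ≡ ∑_{x,y} (g(y) - x³) ^ (p - 1)` with `g(y) = y² + a₃ y - a₆`.

If `p = 3m + 1`, then `C(p - 1, j) ≡ (-1) ^ j` turns `(c - x³) ^ (p - 1)` into `∑ⱼ x^{3j} c^{p-1-j}`,
and only `j = m, 2m, 3m` survive the sum over `x`: the inner sum is `-(1 + c^m + c^{2m})`.
Summing a polynomial of degree `< 2(p - 1)` over `𝔽_p` gives minus its coefficient of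
`y^{p-1}`, so `t_p ≡ [y^{3m}] g(y)^{2m}`, and expanding this trinomial power gives the sum.

If `p ≡ 2 (mod 3)`, cubing is a bijection of `𝔽_p`, so every `y` lies on exactly one point
and `N = p`.
-/

open Finset Polynomial

namespace FiniteField
variable {K : Type*} [Field K] [Fintype K]

theorem sum_pow_eq_ite (k : ℕ) :
    ∑ x : K, x ^ k = if k ≠ 0 ∧ Fintype.card K - 1 ∣ k then -1 else 0 := by
  classical
  rcases eq_or_ne k 0 with rfl | hk
  · simp
  have hunits : ∑ x : Kˣ, (x ^ k : K) = ∑ x : K, x ^ k := by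
    rw [← sum_erase univ (f := fun x : K => x ^ k) (zero_pow hk)]
    refine sum_nbij (fun u => (u : K)) (by simp) ?_ ?_ (by simp)
    · intro u _ v _ h
      exact Units.ext h
    · intro x hx
      exact ⟨Units.mk0 x (ne_of_mem_erase hx), by simp, rfl⟩
  rw [← hunits, sum_pow_units]
  simp [hk]

theorem natCard_eq_sub_sum_pow {α : Type*} [Fintype α] (f g : α → K) :
    (Nat.card {a // f a = g a} : K) =
      Nat.card α - ∑ a, (f a - g a) ^ (Fintype.card K - 1) := by
  classical
  have hq : Fintype.card K - 1 ≠ 0 := by have := Fintype.one_lt_card (α := K); omega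
  rw [Nat.card_eq_fintype_card, Fintype.card_subtype, card_eq_sum_ones, sum_filter,
    Nat.card_eq_fintype_card, ← card_univ, card_eq_sum_ones, Nat.cast_sum,
    Nat.cast_sum, ← sum_sub_distrib]
  refine sum_congr rfl fun a _ => ?_
  split_ifs with h
  · simp [h, zero_pow hq]
  · simp [pow_card_sub_one_eq_one _ (sub_ne_zero.mpr h)]

theorem sum_eval_eq_neg_coeff (P : K[X]) (hP : P.natDegree < 2 * (Fintype.card K - 1)) :
    ∑ x, P.eval x = -P.coeff (Fintype.card K - 1) := by
  have hq : 0 < Fintype.card K - 1 := by have := Fintype.one_lt_card (α := K); omega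
  simp_rw [eval_eq_sum_range' hP]
  rw [sum_comm]
  simp_rw [← mul_sum, sum_pow_eq_ite]
  rw [sum_eq_single_of_mem (Fintype.card K - 1) (mem_range.mpr (by omega))]
  · simp [hq.ne']
  · rintro i hi hne
    rw [if_neg, mul_zero]
    rintro ⟨hi0, c, rfl⟩
    have : c < 2 := by simp only [mem_range] at hi; nlinarith
    interval_cases c <;> simp_all

end FiniteField

theorem Polynomial.coeff_X_sq_add_C_mul_X_add_C_pow {R : Type*} [CommSemiring R] (a b : R)
    {n d : ℕ} (h : n ≤ d) :
    ((X ^ 2 + C a * X + C b) ^ n).coeff d =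
      ∑ i ∈ range (n + 1), n.choose i * i.choose (d - i) * a ^ (2 * i - d) * b ^ (n - i) := by
  rw [show X ^ 2 + C a * X + C b = X * (X + C a) + C b by ring, add_pow, finsetSum_coeff]
  refine sum_congr rfl fun i hi => ?_
  have hid : i ≤ d := by simp at hi; omega
  rw [mul_pow, ← C_pow, ← C_eq_natCast,
    show ∀ (u : R[X]) (v : R), u * C (b ^ (n - i)) * C v = C (b ^ (n - i) * v) * u by
      intros; rw [C_mul]; ring,
    coeff_C_mul, coeff_X_pow_mul', if_pos hid, coeff_X_add_C_pow,
    show i - (d - i) = 2 * i - d by omega]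
  ring

theorem Nat.card_subtype_apply_eq_of_bijective {α β γ : Type*} {f : α → γ}
    (hf : Function.Bijective f) (g : β → γ) :
    Nat.card {P : α × β // f P.1 = g P.2} = Nat.card β := by
  refine Nat.card_eq_of_bijective (fun P => P.1.2) ⟨fun P Q hPQ => ?_, fun y => ?_⟩
  · obtain ⟨⟨x, y⟩, hP⟩ := P
    obtain ⟨⟨x', y'⟩, hQ⟩ := Q
    obtain rfl : y = y' := hPQ
    obtain rfl : x = x' := hf.1 (hP.trans hQ.symm)
    rfl
  · exact ⟨⟨(Function.surjInv hf.2 (g y), y), Function.surjInv_eq hf.2 _⟩, rfl⟩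

namespace ZMod
variable {p : ℕ} [Fact p.Prime]

theorem natCast_choose_sub_one_sub {a b : ℕ} (h : a + b < p) :
    ((p - 1 - a).choose b : ZMod p) = (-1) ^ b * (a + b).choose b := by
  induction b with
  | zero => simp
  | succ b ih =>
    have hb : ((b + 1 : ℕ) : ZMod p) ≠ 0 := by
      rw [Ne, natCast_eq_zero_iff]
      exact Nat.not_dvd_of_pos_of_lt (by omega) (by omega)
    have hsub : ((p - 1 - a - b : ℕ) : ZMod p) = -(a + b + 1 : ℕ) := by
      rw [eq_neg_iff_add_eq_zero, ← Nat.cast_add, show p - 1 - a - b + (a + b + 1) = p by omega,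
        natCast_self]
    apply mul_right_cancel₀ hb
    calc ((p - 1 - a).choose (b + 1) : ZMod p) * (b + 1 : ℕ)
        = (p - 1 - a).choose b * (p - 1 - a - b : ℕ) := by
          rw [← Nat.cast_mul, ← Nat.cast_mul, Nat.choose_succ_right_eq]
      _ = (-1) ^ (b + 1) * ((a + b + 1 : ℕ) * (a + b).choose b) := by
          rw [ih (by omega), hsub]; ring
      _ = (-1) ^ (b + 1) * (a + (b + 1)).choose (b + 1) * (b + 1 : ℕ) := by
          rw [mul_assoc, ← Nat.cast_mul, ← Nat.cast_mul, Nat.add_one_mul_choose_eq]; rfl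

theorem pow_three_bijective (h : p % 3 = 2) : Function.Bijective fun x : ZMod p => x ^ 3 := by
  refine Finite.injective_iff_bijective.mp
    (Function.LeftInverse.injective (g := fun y => y ^ ((2 * p - 1) / 3)) fun x => ?_)
  have hp := (Fact.out : p.Prime).one_lt
  dsimp only
  rw [← pow_mul, show 3 * ((2 * p - 1) / 3) = p - 1 + p by omega, pow_add, pow_card,
    ← pow_succ, Nat.sub_add_cancel hp.le, pow_card]

theorem sub_pow_sub_one_eq_geom_sum₂ (c t : ZMod p) :
    (c - t) ^ (p - 1) = ∑ j ∈ range p, t ^ j * c ^ (p - 1 - j) := by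
  have hp := (Fact.out : p.Prime).one_lt
  rw [sub_eq_neg_add, add_pow, Nat.sub_add_cancel hp.le]
  refine sum_congr rfl fun j hj => ?_
  have hchoose := natCast_choose_sub_one_sub (a := 0) (b := j) (by simpa using hj)
  rw [Nat.sub_zero, zero_add, Nat.choose_self, Nat.cast_one, mul_one] at hchoose
  have hsq : ((-1 : ZMod p) ^ j) ^ 2 = 1 := by rw [← pow_mul, pow_mul']; simp
  rw [hchoose, neg_pow t]
  linear_combination t ^ j * c ^ (p - 1 - j) * hsq

theorem sum_sub_pow_three_pow {m : ℕ} (hp : p = 3 * m + 1) (c : ZMod p) :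
    ∑ x : ZMod p, (c - x ^ 3) ^ (p - 1) = -(c ^ (2 * m) + c ^ m + 1) := by
  have hm : 0 < m := by have := (Fact.out : p.Prime).two_le; omega
  have hindex : (range p).filter (fun j => 3 * j ≠ 0 ∧ p - 1 ∣ 3 * j) = {m, 2 * m, 3 * m} := by
    ext j
    simp only [mem_filter, mem_range, mem_insert, mem_singleton, hp, Nat.add_sub_cancel,
      Nat.mul_dvd_mul_iff_left three_pos]
    constructor
    · rintro ⟨hj, hj0, t, rfl⟩
      have : t < 4 := by nlinarith
      interval_cases t <;> omega
    · rintro (rfl | rfl | rfl) <;> exact ⟨by omega, by omega, by simp⟩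
  simp_rw [sub_pow_sub_one_eq_geom_sum₂, ← pow_mul]
  rw [sum_comm]
  simp_rw [← sum_mul, FiniteField.sum_pow_eq_ite, ZMod.card, ite_mul, neg_one_mul,
    zero_mul]
  rw [← sum_filter, hindex, sum_insert (by simp; omega), sum_insert (by simp; omega),
    sum_singleton, show p - 1 - m = 2 * m by omega, show p - 1 - 2 * m = m by omega,
    show p - 1 - 3 * m = 0 by omega]
  ring

theorem card_weierstrass_eq_of_mod_three_eq_two (h : p % 3 = 2) (A B : ZMod p) :
    Nat.card {P : ZMod p × ZMod p // P.2 ^ 2 + A * P.2 = P.1 ^ 3 + B} = p := by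
  have hiff : ∀ P : ZMod p × ZMod p,
      P.2 ^ 2 + A * P.2 = P.1 ^ 3 + B ↔ P.1 ^ 3 = P.2 ^ 2 + A * P.2 - B :=
    fun P => by rw [eq_sub_iff_add_eq, eq_comm]
  rw [Nat.card_congr (Equiv.subtypeEquivRight hiff)]
  exact (Nat.card_subtype_apply_eq_of_bijective (f := fun x : ZMod p => x ^ 3)
    (pow_three_bijective h) (fun y => y ^ 2 + A * y - B)).trans (Nat.card_zmod p)

theorem neg_card_weierstrass_eq_coeff {m : ℕ} (hp : p = 3 * m + 1) (A B : ZMod p) :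
    -(Nat.card {P : ZMod p × ZMod p // P.2 ^ 2 + A * P.2 = P.1 ^ 3 + B} : ZMod p) =
      ((X ^ 2 + C A * X + C (-B)) ^ (2 * m)).coeff (3 * m) := by
  have hm : 0 < m := by have := (Fact.out : p.Prime).two_le; omega
  set Q : (ZMod p)[X] := X ^ 2 + C A * X + C (-B)
  have hdeg : ∀ n, (Q ^ n).natDegree ≤ n * 2 := fun n =>
    natDegree_pow_le_of_le n (by simp only [Q]; compute_degree!)
  have hsum : ∀ n ≤ 2 * m, ∑ y, (Q ^ n).eval y = -(Q ^ n).coeff (3 * m) := by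
    intro n hn
    have := FiniteField.sum_eval_eq_neg_coeff (Q ^ n)
      ((hdeg n).trans_lt (by rw [ZMod.card]; omega))
    rwa [ZMod.card, show p - 1 = 3 * m by omega] at this
  have hQm : (Q ^ m).coeff (3 * m) = 0 :=
    coeff_eq_zero_of_natDegree_lt ((hdeg m).trans_lt (by omega))
  have hrow : ∀ y : ZMod p, ∑ x : ZMod p, (y ^ 2 + A * y - (x ^ 3 + B)) ^ (p - 1) =
      -((Q ^ (2 * m)).eval y + (Q ^ m).eval y + 1) := by
    intro y
    have hQy : Q.eval y = y ^ 2 + A * y - B := by simp [Q]; ring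
    simp_rw [eval_pow, hQy, ← sum_sub_pow_three_pow hp]
    exact sum_congr rfl fun x _ => by ring
  rw [FiniteField.natCard_eq_sub_sum_pow, Nat.card_eq_fintype_card, Fintype.card_prod, ZMod.card,
    Nat.cast_mul, natCast_self, zero_mul, zero_sub, neg_neg, Fintype.sum_prod_type,
    sum_comm]
  simp_rw [hrow]
  rw [sum_neg_distrib, sum_add_distrib, sum_add_distrib, hsum _ le_rfl, hsum _ (by omega), hQm]
  simp

theorem coeff_three_mul_X_sq_add_C_mul_X_add_C_pow_two_mul {m : ℕ} (hp : p = 3 * m + 1)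
    (hm : Even m) (A B : ZMod p) :
    ((X ^ 2 + C A * X + C (-B)) ^ (2 * m)).coeff (3 * m) =
      ∑ k ∈ Icc (m / 2) m, ((m + k).choose k * k.choose (m - k) : ℕ) * A ^ (2 * k - m) *
        B ^ (m - k) := by
  have hhalf : 2 * (m / 2) = m := Nat.two_mul_div_two_of_even hm
  rw [coeff_X_sq_add_C_mul_X_add_C_pow _ _ (by omega : 2 * m ≤ 3 * m),
    ← sum_subset (s₁ := (Icc (m / 2) m).map (addLeftEmbedding m)), sum_map]
  · refine sum_congr rfl fun k hk => ?_
    rw [mem_Icc] at hk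
    have htrinomial : (2 * m).choose (m + k) * (m + k).choose (2 * m - k) =
        (2 * m).choose k * k.choose (m - k) := by
      rw [Nat.choose_mul (by omega), show 2 * m - (2 * m - k) = k by omega,
        show m + k - (2 * m - k) = 2 * k - m by omega, Nat.choose_symm (by omega),
        Nat.choose_symm_of_eq_add (by omega : k = (2 * k - m) + (m - k))]
    have hcentral : ((2 * m).choose k : ZMod p) = (-1) ^ k * (m + k).choose k := by
      rw [← natCast_choose_sub_one_sub (by omega), show p - 1 - m = 2 * m by omega]
    simp only [addLeftEmbedding_apply]
    rw [show 3 * m - (m + k) = 2 * m - k by omega, show 2 * (m + k) - 3 * m = 2 * k - m by omega,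
      show 2 * m - (m + k) = m - k by omega]
    calc ((2 * m).choose (m + k) : ZMod p) * ((m + k).choose (2 * m - k) : ℕ) *
          A ^ (2 * k - m) * (-B) ^ (m - k)
        = ((2 * m).choose k : ZMod p) * (k.choose (m - k) : ℕ) * A ^ (2 * k - m) *
            ((-1) ^ (m - k) * B ^ (m - k)) := by
          rw [neg_pow, ← Nat.cast_mul, htrinomial]; push_cast; ring
      _ = (-1) ^ (k + (m - k)) * (((m + k).choose k * k.choose (m - k) : ℕ) *
            A ^ (2 * k - m) * B ^ (m - k)) := by
          rw [hcentral]; push_cast; ring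
      _ = _ := by rw [Nat.add_sub_cancel' hk.2, hm.neg_one_pow, one_mul]
  · rw [map_add_left_Icc]
    intro i hi
    simp only [mem_Icc, mem_range] at hi ⊢
    omega
  · intro i hi hni
    rw [map_add_left_Icc, mem_Icc] at hni
    rw [Nat.choose_eq_zero_of_lt (by simp at hi; omega : i < 3 * m - i)]
    simp

end ZMod

theorem sum_choose_mul_choose_mul_zero_pow {R : Type*} [CommSemiring R] {m : ℕ} (hm : Even m)
    (b : R) :
    ∑ k ∈ Icc (m / 2) m, ((m + k).choose k * k.choose (m - k) : R) * 0 ^ (2 * k - m) *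
        b ^ (m - k) = ((m + m / 2).choose (m / 2) : R) * b ^ (m / 2) := by
  have hhalf : 2 * (m / 2) = m := Nat.two_mul_div_two_of_even hm
  rw [sum_eq_single_of_mem (m / 2) (mem_Icc.mpr ⟨le_rfl, by omega⟩)]
  · rw [show 2 * (m / 2) - m = 0 by omega, show m - m / 2 = m / 2 by omega, Nat.choose_self]
    simp
  · intro k hk hne
    rw [mem_Icc] at hk
    rw [zero_pow (by omega)]
    simp

theorem stmt18_general (a₃ a₆ : ℤ)
    (p : ℕ) (hp : p.Prime)
    (Ap : ℕ)
    (hAp : Ap = 1 + Nat.card {P : ZMod p × ZMod p //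
      P.2 ^ 2 + (a₃ : ZMod p) * P.2 = P.1 ^ 3 + (a₆ : ZMod p)})
    (tp : ℤ) (htp : tp = 1 + (p : ℤ) - (Ap : ℤ)) :
    -- (i)
    (p % 3 = 2 → tp = 0) ∧
    -- (ii)
    (p % 3 = 1 →
      tp ≡ ∑ k ∈ Finset.Icc ((p - 1) / 6) ((p - 1) / 3),
        (((p - 1) / 3 + k).choose k * k.choose ((p - 1) / 3 - k) : ℤ) *
          a₃ ^ (2 * k - (p - 1) / 3) * a₆ ^ ((p - 1) / 3 - k) [ZMOD p]) ∧
    -- in particular, for y² = x³ + a₆ :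
    (a₃ = 0 → ¬ ((p : ℤ) ∣ 6 * a₆) →
      (p % 6 ≠ 1 → tp = 0) ∧
      (p % 6 = 1 →
        tp ≡ (((p - 1) / 2).choose ((p - 1) / 6) : ℤ) * a₆ ^ ((p - 1) / 6) [ZMOD p])) := by
  have : Fact p.Prime := ⟨hp⟩
  have htp_card : tp = p - Nat.card {P : ZMod p × ZMod p //
      P.2 ^ 2 + (a₃ : ZMod p) * P.2 = P.1 ^ 3 + (a₆ : ZMod p)} := by
    rw [htp, hAp]; push_cast; ring
  have hodd : p = 2 ∨ p % 2 = 1 := hp.eq_two_or_odd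
  have part_i : p % 3 = 2 → tp = 0 := fun h => by
    rw [htp_card, ZMod.card_weierstrass_eq_of_mod_three_eq_two h]; ring
  have part_ii : p % 3 = 1 → tp ≡ ∑ k ∈ Icc ((p - 1) / 6) ((p - 1) / 3),
      (((p - 1) / 3 + k).choose k * k.choose ((p - 1) / 3 - k) : ℤ) *
        a₃ ^ (2 * k - (p - 1) / 3) * a₆ ^ ((p - 1) / 3 - k) [ZMOD p] := fun h => by
    rw [← ZMod.intCast_eq_intCast_iff, htp_card]
    push_cast
    rw [ZMod.natCast_self, zero_sub,
      ZMod.neg_card_weierstrass_eq_coeff (m := (p - 1) / 3) (by omega),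
      ZMod.coeff_three_mul_X_sq_add_C_mul_X_add_C_pow_two_mul (by omega)
        (Nat.even_iff.mpr (by omega)), show (p - 1) / 3 / 2 = (p - 1) / 6 by omega]
    push_cast
    rfl
  refine ⟨part_i, part_ii, fun ha₃ h6 => ⟨fun h => part_i ?_, fun h => ?_⟩⟩
  · have hp3 : p ≠ 3 := by rintro rfl; exact h6 ⟨2 * a₆, by ring⟩
    have : p % 3 ≠ 0 := fun h0 =>
      hp3 ((Nat.prime_dvd_prime_iff_eq Nat.prime_three hp).mp (Nat.dvd_of_mod_eq_zero h0)).symm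
    omega
  · convert part_ii (by omega) using 2
    rw [ha₃, show (p - 1) / 6 = (p - 1) / 3 / 2 by omega,
      sum_choose_mul_choose_mul_zero_pow (m := (p - 1) / 3) (Nat.even_iff.mpr (by omega)),
      show (p - 1) / 3 + (p - 1) / 3 / 2 = (p - 1) / 2 by omega]

theorem stmt18 (a₃ a₆ : ℤ) (hΔ : a₃ ^ 2 + 4 * a₆ ≠ 0)
    (p : ℕ) (hp : p.Prime) (hpΔ : ¬ ((p : ℤ) ∣ 3 * (a₃ ^ 2 + 4 * a₆)))
    (Ap : ℕ)
    (hAp : Ap = 1 + Nat.card {P : ZMod p × ZMod p //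
      P.2 ^ 2 + (a₃ : ZMod p) * P.2 = P.1 ^ 3 + (a₆ : ZMod p)})
    (tp : ℤ) (htp : tp = 1 + (p : ℤ) - (Ap : ℤ)) :
    -- (i)
    (p % 3 = 2 → tp = 0) ∧
    -- (ii)
    (p % 3 = 1 →
      tp ≡ ∑ k ∈ Finset.Icc ((p - 1) / 6) ((p - 1) / 3),
        (((p - 1) / 3 + k).choose k * k.choose ((p - 1) / 3 - k) : ℤ) *
          a₃ ^ (2 * k - (p - 1) / 3) * a₆ ^ ((p - 1) / 3 - k) [ZMOD p]) ∧
    -- in particular, for y² = x³ + a₆ :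
    (a₃ = 0 → ¬ ((p : ℤ) ∣ 6 * a₆) →
      (p % 6 ≠ 1 → tp = 0) ∧
      (p % 6 = 1 →
        tp ≡ (((p - 1) / 2).choose ((p - 1) / 6) : ℤ) * a₆ ^ ((p - 1) / 6) [ZMOD p])) :=
  stmt18_general a₃ a₆ p hp Ap hAp tp htp
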